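/- arXiv:2312.15834 — 3 statements merged into one kernel-verified Lean document; each statement's English description precedes it below -/
import Mathlib

section
/- Let Q ⊆ I be a finite index set, P ⊆ Q, and aᵢ ∈ ℝⁿ for i ∈ Q. Define B_{Q,P} = {u ∈ ℝⁿ : ⟨aᵢ, u⟩ ≤ 0 for all i ∈ Q, and ⟨aᵢ, u⟩ = 0 for all i ∈ P} and A_{Q,P} = cone{aᵢ : i ∈ Q \ P} + span{aᵢ : i ∈ P}. Then the polar cone of B_{Q,P} equals A_{Q,P}: (B_{Q,P})° = A_{Q,P}. -/
/-!
A finitely generated cone is closed: pivoting along linear dependencies writes it as a finite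
union of cones over linearly independent families, and each of those is the image of the closed
nonnegative orthant under an injective linear map. Separating a point from this closed cone
(Farkas' lemma) shows that the polar of `{u | ⟪g i, u⟫ ≤ 0 for i ∈ s}` is the cone generated by
the `g i`. The theorem is the instance with generators `a i` (`i ∈ Q`) and `-a i` (`i ∈ P`): an
equality constraint is a pair of opposite inequalities, and `span {a i | i ∈ P}` is the cone
generated by the `±a i`.
-/

open Finset
open scoped RealInnerProductSpace

section ConicHull

variable {ι E : Type*} [AddCommGroup E] [Module ℝ E]

def conicHull (g : ι → E) (s : Finset ι) : PointedCone ℝ E where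
  carrier := {x | ∃ c : ι → ℝ, (∀ i, 0 ≤ c i) ∧ x = ∑ i ∈ s, c i • g i}
  zero_mem' := ⟨0, fun _ => le_rfl, by simp⟩
  add_mem' := by
    rintro _ _ ⟨c, hc, rfl⟩ ⟨c', hc', rfl⟩
    exact ⟨c + c', fun i => add_nonneg (hc i) (hc' i), by simp [add_smul, sum_add_distrib]⟩
  smul_mem' := by
    rintro t _ ⟨c, hc, rfl⟩
    exact ⟨(t : ℝ) • c, fun i => mul_nonneg t.2 (hc i), by simp [smul_sum, mul_smul]⟩

variable {g : ι → E} {s t : Finset ι} {x : E}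

lemma mem_conicHull : x ∈ conicHull g s ↔ ∃ c : ι → ℝ, (∀ i, 0 ≤ c i) ∧ x = ∑ i ∈ s, c i • g i :=
  Iff.rfl

lemma mem_conicHull_of_mem [DecidableEq ι] {i : ι} (hi : i ∈ s) : g i ∈ conicHull g s :=
  ⟨Pi.single i 1, fun j => by rw [Pi.single_apply]; split_ifs <;> norm_num,
    by simp [Pi.single_apply, hi]⟩

lemma conicHull_mono [DecidableEq ι] (hst : s ⊆ t) : conicHull g s ≤ conicHull g t := by
  rintro _ ⟨c, hc, rfl⟩
  refine ⟨fun i => if i ∈ s then c i else 0, fun i => by dsimp only; split_ifs <;> simp [hc], ?_⟩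
  simp only [ite_smul, zero_smul, sum_ite_mem, inter_eq_right.mpr hst]

lemma conicHull_eq_image :
    (conicHull g s : Set E) = Fintype.linearCombination ℝ (fun i : s => g i) '' Set.Ici 0 := by
  classical
  ext x
  simp only [SetLike.mem_coe, mem_conicHull, Set.mem_image, Set.mem_Ici,
    Fintype.linearCombination_apply]
  constructor
  · rintro ⟨c, hc, rfl⟩
    exact ⟨fun i => c i, fun i => hc i, s.sum_coe_sort (fun i => c i • g i)⟩
  · rintro ⟨c, hc, rfl⟩
    refine ⟨fun i => if h : i ∈ s then c ⟨i, h⟩ else 0, fun i => ?_, ?_⟩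
    · dsimp only
      split_ifs
      exacts [hc _, le_rfl]
    · rw [← s.sum_coe_sort]
      exact sum_congr rfl fun i _ => by simp

/-- Conic Carathéodory step: subtract the largest multiple of the dependency `d` that keeps all
coefficients nonnegative; the coefficient attaining `min c i / d i` then vanishes. -/
lemma exists_mem_conicHull_erase_of_sum_eq_zero {d : ι → ℝ} [DecidableEq ι]
    (hd : ∑ i ∈ s, d i • g i = 0) (hpos : ∃ i ∈ s, 0 < d i) (hx : x ∈ conicHull g s) :
    ∃ i ∈ s, x ∈ conicHull g (s.erase i) := by
  obtain ⟨c, hc, rfl⟩ := hx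
  obtain ⟨i₀, hi₀, hmin⟩ := (s.filter (0 < d ·)).exists_min_image (fun i => c i / d i)
    (by simpa [Finset.Nonempty] using hpos)
  obtain ⟨hi₀s, hdi₀⟩ := mem_filter.mp hi₀
  set r := c i₀ / d i₀
  have hle : ∀ i ∈ s, 0 ≤ c i - r * d i := by
    intro i hi
    rcases lt_or_ge 0 (d i) with hdi | hdi
    · have := hmin i (mem_filter.mpr ⟨hi, hdi⟩)
      rw [le_div_iff₀ hdi] at this
      linarith
    · nlinarith [hc i, div_nonneg (hc i₀) hdi₀.le]
  have hzero : c i₀ - r * d i₀ = 0 := by simp [r, hdi₀.ne']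
  refine ⟨i₀, hi₀s, fun i => max (c i - r * d i) 0, fun i => le_max_right _ _, ?_⟩
  calc ∑ i ∈ s, c i • g i = ∑ i ∈ s, (c i - r * d i) • g i := by
        simp [sub_smul, sum_sub_distrib, mul_smul, ← smul_sum, hd]
    _ = ∑ i ∈ s.erase i₀, (c i - r * d i) • g i := by
        rw [← add_sum_erase s _ hi₀s, hzero, zero_smul, zero_add]
    _ = _ := sum_congr rfl fun i hi => by
        dsimp only
        rw [max_eq_left (hle i (mem_of_mem_erase hi))]

lemma conicHull_eq_biUnion_erase [DecidableEq ι] (h : ¬LinearIndepOn ℝ g (s : Set ι)) :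
    (conicHull g s : Set E) = ⋃ i ∈ s, (conicHull g (s.erase i) : Set E) := by
  refine subset_antisymm (fun x hx => ?_)
    (Set.iUnion₂_subset fun i _ => conicHull_mono (erase_subset i s))
  obtain ⟨d, hd, i, hi, hdi⟩ := not_linearIndepOn_finset_iff.mp h
  rcases hdi.lt_or_gt with hneg | hpos
  · simpa using exists_mem_conicHull_erase_of_sum_eq_zero (d := -d) (by simp [hd])
      ⟨i, hi, neg_pos.mpr hneg⟩ hx
  · simpa using exists_mem_conicHull_erase_of_sum_eq_zero hd ⟨i, hi, hpos⟩ hx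

end ConicHull

section Closed

variable {ι E : Type*} [NormedAddCommGroup E] [NormedSpace ℝ E]

lemma isClosed_conicHull_of_linearIndepOn {g : ι → E} {s : Finset ι}
    (h : LinearIndepOn ℝ g (s : Set ι)) : IsClosed (conicHull g s : Set E) := by
  rw [conicHull_eq_image]
  refine (LinearMap.isClosedEmbedding_of_injective ?_).isClosedMap _ isClosed_Ici
  exact LinearMap.ker_eq_bot.mpr h.fintypeLinearCombination_injective

theorem isClosed_conicHull [FiniteDimensional ℝ E] [DecidableEq ι] (g : ι → E) (s : Finset ι) :
    IsClosed (conicHull g s : Set E) := by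
  induction s using Finset.strongInduction with
  | _ s ih =>
    by_cases h : LinearIndepOn ℝ g (s : Set ι)
    · exact isClosed_conicHull_of_linearIndepOn h
    · rw [conicHull_eq_biUnion_erase h]
      exact s.finite_toSet.isClosed_biUnion fun i hi => ih _ (erase_ssubset hi)

end Closed

section Polar

variable {ι E : Type*} [NormedAddCommGroup E] [InnerProductSpace ℝ E]

def innerPolar (K : Set E) : Set E := {v | ∀ u ∈ K, ⟪v, u⟫ ≤ 0}

lemma inner_nonpos_of_mem_conicHull {g : ι → E} {s : Finset ι} {u v : E}
    (hu : ∀ i ∈ s, ⟪g i, u⟫ ≤ 0) (hv : v ∈ conicHull g s) : ⟪v, u⟫ ≤ 0 := by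
  obtain ⟨c, hc, rfl⟩ := hv
  rw [sum_inner]
  exact sum_nonpos fun i hi => by
    rw [real_inner_smul_left]
    exact mul_nonpos_of_nonneg_of_nonpos (hc i) (hu i hi)

theorem innerPolar_setOf_inner_nonpos [FiniteDimensional ℝ E] [DecidableEq ι]
    (g : ι → E) (s : Finset ι) :
    innerPolar {u | ∀ i ∈ s, ⟪g i, u⟫ ≤ 0} = conicHull g s := by
  refine subset_antisymm (fun v hv => ?_) fun v hv u hu => inner_nonpos_of_mem_conicHull hu hv
  by_contra hvC
  let C : ProperCone ℝ E := ⟨conicHull g s, isClosed_conicHull g s⟩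
  obtain ⟨y, hCy, hvy⟩ := C.hyperplane_separation' (x₀ := v) hvC
  have hgy : ∀ i ∈ s, ⟪g i, -y⟫ ≤ 0 := fun i hi => by
    simpa using hCy _ (mem_conicHull_of_mem hi)
  have := hv (-y) hgy
  rw [inner_neg_right] at this
  linarith

end Polar

section EqualityConstraints

variable {ι E : Type*}

lemma sum_disjSum_sumElim_neg [AddCommGroup E] [Module ℝ E] [DecidableEq ι] {g : ι → E}
    {s t : Finset ι} (hts : t ⊆ s) (c : ι ⊕ ι → ℝ) :
    ∑ j ∈ s.disjSum t, c j • Sum.elim g (-g) j =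
      ∑ i ∈ s \ t, c (.inl i) • g i + ∑ i ∈ t, (c (.inl i) - c (.inr i)) • g i := by
  rw [sum_disjSum, ← sum_sdiff hts]
  simp only [Sum.elim_inl, Sum.elim_inr, Pi.neg_apply, smul_neg, sum_neg_distrib, sub_smul,
    sum_sub_distrib]
  abel

lemma conicHull_sdiff_add_span_eq [AddCommGroup E] [Module ℝ E] [DecidableEq ι] {g : ι → E}
    {s t : Finset ι} (hts : t ⊆ s) :
    {v | ∃ w z : E, (∃ lam : ι → ℝ, (∀ i, 0 ≤ lam i) ∧ w = ∑ i ∈ s \ t, lam i • g i) ∧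
        (∃ mu : ι → ℝ, z = ∑ i ∈ t, mu i • g i) ∧ v = w + z} =
      (conicHull (Sum.elim g (-g)) (s.disjSum t) : Set E) := by
  ext v
  constructor
  · rintro ⟨w, z, ⟨lam, hlam, rfl⟩, ⟨mu, rfl⟩, rfl⟩
    refine ⟨Sum.elim (fun i => if i ∈ t then (mu i)⁺ else lam i) (fun i => (mu i)⁻),
      ?_, ?_⟩
    · rintro (i | i)
      · dsimp only [Sum.elim_inl]
        split_ifs
        exacts [posPart_nonneg _, hlam i]
      · exact negPart_nonneg _
    · rw [sum_disjSum_sumElim_neg hts]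
      congr 1
      · exact sum_congr rfl fun i hi => by simp [(mem_sdiff.mp hi).2]
      · exact sum_congr rfl fun i hi => by simp [hi, posPart_sub_negPart]
  · rintro ⟨c, hc, rfl⟩
    rw [sum_disjSum_sumElim_neg hts]
    exact ⟨_, _, ⟨fun i => c (.inl i), fun i => hc _, rfl⟩, ⟨_, rfl⟩, rfl⟩

lemma setOf_inner_nonpos_and_eq_zero [NormedAddCommGroup E] [InnerProductSpace ℝ E]
    {a : ι → E} {Q P : Finset ι} (hPQ : P ⊆ Q) :
    {u | (∀ i ∈ Q, ⟪a i, u⟫ ≤ 0) ∧ ∀ i ∈ P, ⟪a i, u⟫ = 0} =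
      {u | ∀ j ∈ Q.disjSum P, ⟪Sum.elim a (-a) j, u⟫ ≤ 0} := by
  ext u
  simp only [Set.mem_ofPred_eq, Sum.forall, inl_mem_disjSum, inr_mem_disjSum, Sum.elim_inl,
    Sum.elim_inr, Pi.neg_apply, inner_neg_left, Left.neg_nonpos_iff, and_congr_right_iff]
  exact fun hQ => ⟨fun hP i hi => (hP i hi).ge,
    fun hP i hi => le_antisymm (hQ i (hPQ hi)) (hP i hi)⟩

end EqualityConstraints

/-- Polar cone formula: `(B_{Q,P})° = A_{Q,P} = cone{aᵢ : i ∈ Q \ P} + span{aᵢ : i ∈ P}`. -/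
theorem stmt2 {n m : ℕ} (a : Fin m → EuclideanSpace ℝ (Fin n))
    (Q P : Finset (Fin m)) (hPQ : P ⊆ Q)
    (B : Set (EuclideanSpace ℝ (Fin n)))
    (hB : B = {u | (∀ i ∈ Q, (inner ℝ (a i) u : ℝ) ≤ 0) ∧ ∀ i ∈ P, (inner ℝ (a i) u : ℝ) = 0}) :
    {v : EuclideanSpace ℝ (Fin n) | ∀ u ∈ B, (inner ℝ v u : ℝ) ≤ 0} =
      {v | ∃ w z : EuclideanSpace ℝ (Fin n),
        (∃ lam : Fin m → ℝ, (∀ i, 0 ≤ lam i) ∧ w = ∑ i ∈ Q \ P, lam i • a i) ∧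
        (∃ mu : Fin m → ℝ, z = ∑ i ∈ P, mu i • a i) ∧ v = w + z} := by
  rw [conicHull_sdiff_add_span_eq hPQ, ← innerPolar_setOf_inner_nonpos,
    ← setOf_inner_nonpos_and_eq_zero hPQ, ← hB]
  rfl
end

section
/- Let Θ and C be convex polyhedra in ℝⁿ given by Θ = {x : ⟨aᵢ, x⟩ ≤ bᵢ, i ∈ I₁} and C = {x : ⟨aᵢ, x⟩ ≤ 0, i ∈ I₂}. Let 𝒩(x) = N(x,Θ) for x ∈ Θ (and ∅ otherwise), x̄ ∈ Θ ∩ C, x̄* ∈ 𝒩(x̄). Then the Fréchet normal cone with respect to C × ℝⁿ of gph 𝒩 at (x̄, x̄*) equals ((T(x̄, Θ ∩ C) ∩ {x̄*}^⊥)° ∩ T(x̄, C)) × (T(x̄, Θ) ∩ {x̄*}^⊥). -/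
open Set Filter Topology

noncomputable section

variable {n : ℕ}

/-- The natural inner product pairing on the product `ℝⁿ × ℝⁿ`. -/
def pInner (p q : EuclideanSpace ℝ (Fin n) × EuclideanSpace ℝ (Fin n)) : ℝ :=
  (inner ℝ p.1 q.1 : ℝ) + (inner ℝ p.2 q.2 : ℝ)

/-- The sequential tangent cone. -/
def tcone (S : Set (EuclideanSpace ℝ (Fin n))) (x : EuclideanSpace ℝ (Fin n)) :
    Set (EuclideanSpace ℝ (Fin n)) :=
  {u | ∃ (t : ℕ → ℝ) (w : ℕ → EuclideanSpace ℝ (Fin n)),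
    (∀ k, 0 < t k) ∧ Tendsto t atTop (𝓝 0) ∧ Tendsto w atTop (𝓝 u) ∧ ∀ k, x + t k • w k ∈ S}

/-- The polar cone. -/
def polar (K : Set (EuclideanSpace ℝ (Fin n))) : Set (EuclideanSpace ℝ (Fin n)) :=
  {v | ∀ u ∈ K, (inner ℝ v u : ℝ) ≤ 0}

/-- The Fréchet normal cone of a subset of the product space with respect to a set `D`. -/
def pFncWrt (D S : Set (EuclideanSpace ℝ (Fin n) × EuclideanSpace ℝ (Fin n)))
    (z : EuclideanSpace ℝ (Fin n) × EuclideanSpace ℝ (Fin n)) :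
    Set (EuclideanSpace ℝ (Fin n) × EuclideanSpace ℝ (Fin n)) :=
  {v | (∃ p > (0:ℝ), z + p • v ∈ D) ∧
    ∀ ε > (0:ℝ), ∀ᶠ y in nhdsWithin z (S ∩ D), pInner v (y - z) ≤ ε * ‖y - z‖}


/-! Near `(x̄, x̄*)`, a point `(y, y*)` of the graph (restricted to `C × ℝⁿ`) has its active
constraints among those active at `x̄`, and, since only finitely many (closed) normal cones
occur, `x̄*` is normal at `y` too. So the restricted graph is star-shaped about `(x̄, x̄*)`
near it, and the `ε` of the Fréchet condition can be dropped: the Fréchet normals are the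
`v` with `⟪v, (y, y*) - (x̄, x̄*)⟫ ≤ 0` for nearby graph points. Testing this along the
segments towards `(x̄ + s u, x̄*)` and `(x̄, w)` with `w ∈ N(x̄, Θ)` gives `⊆`; conversely,
`x̄*` being normal at both `x̄` and `y` forces `⟪x̄*, y - x̄⟫ = 0`, which gives `⊇`. -/

open scoped RealInnerProductSpace

section Polyhedron

variable {E ι : Type*} [NormedAddCommGroup E] [InnerProductSpace ℝ E]
  (a : ι → E) (b : ι → ℝ) (I : Finset ι)

def polyhedron : Set E := {x | ∀ i ∈ I, ⟪a i, x⟫ ≤ b i}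

def activeSet (x : E) : Finset ι := {i ∈ I | ⟪a i, x⟫ = b i}

def linCone (A : Finset ι) : Set E := {u | ∀ i ∈ A, ⟪a i, u⟫ ≤ 0}

/-- The graph of the normal cone mapping of `polyhedron a b I`. -/
def normalGraph : Set (E × E) :=
  {p | p.1 ∈ polyhedron a b I ∧ ∀ y ∈ polyhedron a b I, ⟪p.2, y - p.1⟫ ≤ 0}

variable {a b I}

lemma mem_activeSet {x : E} {i : ι} : i ∈ activeSet a b I x ↔ i ∈ I ∧ ⟪a i, x⟫ = b i :=
  Finset.mem_filter

lemma activeSet_subset (x : E) : activeSet a b I x ⊆ I := Finset.filter_subset _ _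

lemma convex_polyhedron : Convex ℝ (polyhedron a b I) := by
  intro x hx y hy α β hα hβ hαβ i hi
  rw [inner_add_right, real_inner_smul_right, real_inner_smul_right]
  have hb : α * b i + β * b i = b i := by rw [← add_mul, hαβ, one_mul]
  nlinarith [mul_le_mul_of_nonneg_left (hx i hi) hα, mul_le_mul_of_nonneg_left (hy i hi) hβ]

lemma mem_activeSet_add {x y : E} {α β : ℝ} {i : ι} (hαβ : α + β = 1)
    (hix : i ∈ activeSet a b I x) (hiy : i ∈ activeSet a b I y) :
    i ∈ activeSet a b I (α • x + β • y) := by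
  obtain ⟨hiI, hx⟩ := mem_activeSet.1 hix
  obtain ⟨-, hy⟩ := mem_activeSet.1 hiy
  refine mem_activeSet.2 ⟨hiI, ?_⟩
  rw [inner_add_right, real_inner_smul_right, real_inner_smul_right, hx, hy, ← add_mul, hαβ,
    one_mul]

lemma linCone_anti {A B : Finset ι} (h : A ⊆ B) : linCone a B ⊆ linCone a A :=
  fun _ hu i hi => hu i (h hi)

lemma sub_mem_linCone_activeSet {y : E} (hy : y ∈ polyhedron a b I) (x : E) :
    y - x ∈ linCone a (activeSet a b I x) := by
  intro i hi
  obtain ⟨hiI, hx⟩ := mem_activeSet.1 hi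
  rw [inner_sub_right, hx, sub_nonpos]
  exact hy i hiI

/-- Constraints inactive at `x` stay inactive for small steps. -/
lemma eventually_add_smul_mem_polyhedron {x u : E} (hx : x ∈ polyhedron a b I)
    (hu : u ∈ linCone a (activeSet a b I x)) :
    ∀ᶠ s in 𝓝[>] (0 : ℝ), x + s • u ∈ polyhedron a b I := by
  refine (eventually_all_finset I).2 fun i hi => ?_
  by_cases hact : ⟪a i, x⟫ = b i
  · filter_upwards [self_mem_nhdsWithin] with s (hs : 0 < s)
    rw [inner_add_right, real_inner_smul_right, hact]
    nlinarith [hu i (mem_activeSet.2 ⟨hi, hact⟩)]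
  · have hcont : Tendsto (fun s : ℝ => ⟪a i, x + s • u⟫) (𝓝 0) (𝓝 ⟪a i, x⟫) := by
      have : Continuous fun s : ℝ => ⟪a i, x + s • u⟫ := by fun_prop
      simpa using this.tendsto 0
    exact nhdsWithin_le_nhds <| (hcont.eventually (eventually_lt_nhds
      (lt_of_le_of_ne (hx i hi) hact))).mono fun _ => le_of_lt

lemma eventually_activeSet_subset (x : E) :
    ∀ᶠ y in 𝓝 x, activeSet a b I y ⊆ activeSet a b I x := by
  have : ∀ i ∈ I, ∀ᶠ y in 𝓝 x, ⟪a i, y⟫ = b i → ⟪a i, x⟫ = b i := by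
    intro i _
    by_cases h : ⟪a i, x⟫ = b i
    · exact Eventually.of_forall fun _ _ => h
    · have hcont : ContinuousAt (fun y => ⟪a i, y⟫) x := by fun_prop
      filter_upwards [hcont.eventually_ne h] with y hy hy' using absurd hy' hy
  filter_upwards [(eventually_all_finset I).2 this] with y hy i hi
  obtain ⟨hiI, hiy⟩ := mem_activeSet.1 hi
  exact mem_activeSet.2 ⟨hiI, hy i hiI hiy⟩

lemma forall_inner_sub_nonpos_iff {x w : E} (hx : x ∈ polyhedron a b I) :
    (∀ y ∈ polyhedron a b I, ⟪w, y - x⟫ ≤ 0) ↔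
      ∀ u ∈ linCone a (activeSet a b I x), ⟪w, u⟫ ≤ 0 := by
  refine ⟨fun h u hu => ?_, fun h y hy => h _ (sub_mem_linCone_activeSet hy x)⟩
  obtain ⟨s, hsP, hs⟩ :=
    ((eventually_add_smul_mem_polyhedron hx hu).and self_mem_nhdsWithin).exists
  have := h _ hsP
  rw [add_sub_cancel_left, real_inner_smul_right] at this
  exact nonpos_of_mul_nonpos_right this hs

end Polyhedron

lemma eventually_forall_mem_imp_mem {X ι : Type*} [TopologicalSpace X] {F : ι → Set X}
    {J : Finset ι} (hF : ∀ j ∈ J, IsClosed (F j)) (x : X) :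
    ∀ᶠ y in 𝓝 x, ∀ j ∈ J, y ∈ F j → x ∈ F j := by
  refine (eventually_all_finset J).2 fun j hj => ?_
  by_cases hx : x ∈ F j
  · exact Eventually.of_forall fun _ _ => hx
  · filter_upwards [(hF j hj).isOpen_compl.mem_nhds hx] with y hy h using absurd h hy

section Frechet

variable {F : Type*} [NormedAddCommGroup F] [NormedSpace ℝ F] {S U : Set F} {z d : F}
  {f : F → ℝ}

lemma tendsto_add_smul_nhdsWithin (hd : ∀ᶠ s in 𝓝[>] (0 : ℝ), z + s • d ∈ S) :
    Tendsto (fun s : ℝ => z + s • d) (𝓝[>] 0) (𝓝[S] z) := by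
  refine tendsto_nhdsWithin_iff.2 ⟨?_, hd⟩
  have : Continuous fun s : ℝ => z + s • d := by fun_prop
  simpa using (this.tendsto 0).mono_left nhdsWithin_le_nhds

lemma nonpos_of_eventually_nonpos (hf : ∀ τ : ℝ, ∀ w, f (τ • w) = τ * f w)
    (hS : ∀ᶠ y in 𝓝[S] z, f (y - z) ≤ 0) (hd : ∀ᶠ s in 𝓝[>] (0 : ℝ), z + s • d ∈ S) :
    f d ≤ 0 := by
  obtain ⟨s, hs, hs0⟩ := (((tendsto_add_smul_nhdsWithin hd).eventually hS).and
    self_mem_nhdsWithin).exists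
  rw [add_sub_cancel_left, hf] at hs
  exact nonpos_of_mul_nonpos_right hs hs0

/-- For a set that is star-shaped about `z` near `z`, the Fréchet normality condition loses
its `ε`. -/
lemma forall_eventually_le_mul_norm_iff (hf : ∀ τ : ℝ, ∀ w, f (τ • w) = τ * f w)
    (hU : U ∈ 𝓝 z) (hstar : StarConvex ℝ z (S ∩ U)) :
    (∀ ε > (0 : ℝ), ∀ᶠ y in 𝓝[S] z, f (y - z) ≤ ε * ‖y - z‖) ↔
      ∀ᶠ y in 𝓝[S] z, f (y - z) ≤ 0 := by
  refine ⟨fun h => ?_, fun h ε hε => h.mono fun y hy => hy.trans (by positivity)⟩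
  filter_upwards [mem_nhdsWithin_of_mem_nhds hU, self_mem_nhdsWithin] with y hyU hyS
  by_contra! hpos
  have hseg : ∀ᶠ s in 𝓝[>] (0 : ℝ), z + s • (y - z) ∈ S := by
    filter_upwards [Ioo_mem_nhdsGT one_pos] with s hs
    exact (hstar.add_smul_sub_mem ⟨hyS, hyU⟩ hs.1.le hs.2.le).1
  obtain ⟨s, hs, hs0⟩ := (((tendsto_add_smul_nhdsWithin hseg).eventually
    (h (f (y - z) / (‖y - z‖ + 1)) (by positivity))).and self_mem_nhdsWithin).exists
  rw [add_sub_cancel_left, hf, norm_smul, Real.norm_of_nonneg (le_of_lt hs0)] at hs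
  have : f (y - z) / (‖y - z‖ + 1) * ‖y - z‖ < f (y - z) := by
    rw [div_mul_eq_mul_div, div_lt_iff₀ (by positivity)]
    nlinarith [norm_nonneg (y - z)]
  nlinarith [mul_lt_mul_of_pos_left this (show (0 : ℝ) < s from hs0)]

end Frechet

section Euclidean

local notation "E" => EuclideanSpace ℝ (Fin n)

variable {ι : Type*} {a : ι → EuclideanSpace ℝ (Fin n)} {b : ι → ℝ} {I : Finset ι}

lemma pInner_smul_right (v : E × E) (τ : ℝ) (w : E × E) : pInner v (τ • w) = τ * pInner v w := by
  simp only [pInner, Prod.smul_fst, Prod.smul_snd, real_inner_smul_right]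
  ring

lemma isClosed_polar (K : Set E) : IsClosed (polar K) := by
  simp only [polar, ofPred_forall]
  exact isClosed_biInter fun u _ => isClosed_le (continuous_id.inner continuous_const)
    continuous_const

lemma polar_anti {K K' : Set E} (h : K ⊆ K') : polar K' ⊆ polar K :=
  fun _ hv u hu => hv u (h hu)

lemma add_mem_polar {K : Set E} {v v' : E} (hv : v ∈ polar K) (hv' : v' ∈ polar K) :
    v + v' ∈ polar K := fun u hu => by
  rw [inner_add_left]
  linarith [hv u hu, hv' u hu]

lemma smul_mem_polar {K : Set E} {v : E} {c : ℝ} (hc : 0 ≤ c) (hv : v ∈ polar K) :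
    c • v ∈ polar K := fun u hu => by
  rw [real_inner_smul_left]
  nlinarith [hv u hu]

lemma convex_polar (K : Set E) : Convex ℝ (polar K) :=
  fun _ hv _ hv' _ _ hα hβ _ => add_mem_polar (smul_mem_polar hα hv) (smul_mem_polar hβ hv')

lemma mem_polar_linCone {A : Finset ι} {i : ι} (hi : i ∈ A) : a i ∈ polar (linCone a A) :=
  fun _ hu => hu i hi

lemma mem_normalGraph_iff {p : E × E} :
    p ∈ normalGraph a b I ↔
      p.1 ∈ polyhedron a b I ∧ p.2 ∈ polar (linCone a (activeSet a b I p.1)) :=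
  and_congr_right fun hp => forall_inner_sub_nonpos_iff hp

lemma mem_tcone_of_eventually {S : Set E} {x u : E}
    (h : ∀ᶠ s in 𝓝[>] (0 : ℝ), x + s • u ∈ S) : u ∈ tcone S x := by
  obtain ⟨ε, hε : 0 < ε, hS⟩ := mem_nhdsGT_iff_exists_Ioo_subset.1 h
  refine ⟨fun k => ε / 2 * (1 / ((k : ℝ) + 1)), fun _ => u, fun k => by positivity, ?_,
    tendsto_const_nhds, fun k => hS ⟨by positivity, ?_⟩⟩
  · simpa using tendsto_one_div_add_atTop_nhds_zero_nat.const_mul (ε / 2)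
  · have : 1 / ((k : ℝ) + 1) ≤ 1 := div_le_one_of_le₀ (by linarith [k.cast_nonneg (α := ℝ)])
      (by positivity)
    show ε / 2 * (1 / ((k : ℝ) + 1)) < ε
    nlinarith

lemma mem_tcone_of_add_smul_mem {S : Set E} {x u : E} {p : ℝ} (hS : Convex ℝ S) (hx : x ∈ S)
    (hp : 0 < p) (h : x + p • u ∈ S) : u ∈ tcone S x := by
  refine mem_tcone_of_eventually ?_
  filter_upwards [Ioo_mem_nhdsGT hp] with s hs
  have := hS.add_smul_mem hx h ⟨div_nonneg hs.1.le hp.le, (div_le_one hp).2 hs.2.le⟩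
  rwa [smul_smul, div_mul_cancel₀ _ hp.ne'] at this

lemma tcone_subset_linCone {S : Set E} (hS : S ⊆ polyhedron a b I) (x : E) :
    tcone S x ⊆ linCone a (activeSet a b I x) := by
  rintro u ⟨t, w, ht, -, hw, hxw⟩ i hi
  obtain ⟨hiI, hx⟩ := mem_activeSet.1 hi
  have hwi : ∀ k, ⟪a i, w k⟫ ≤ 0 := fun k => by
    have := hS (hxw k) i hiI
    rw [inner_add_right, real_inner_smul_right, hx] at this
    nlinarith [ht k]
  exact le_of_tendsto (tendsto_const_nhds.inner hw) (Eventually.of_forall hwi)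

lemma tcone_polyhedron {x : E} (hx : x ∈ polyhedron a b I) :
    tcone (polyhedron a b I) x = linCone a (activeSet a b I x) :=
  (tcone_subset_linCone subset_rfl x).antisymm fun _ hu =>
    mem_tcone_of_eventually (eventually_add_smul_mem_polyhedron hx hu)

/-- Only finitely many normal cones occur, all closed, so `w` lies in each one that meets a small
neighbourhood of `w`. -/
lemma eventually_normalGraph_local (x w : E) :
    ∀ᶠ p in 𝓝 (x, w), p ∈ normalGraph a b I →
      activeSet a b I p.1 ⊆ activeSet a b I x ∧ w ∈ polar (linCone a (activeSet a b I p.1)) := by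
  have hw := eventually_forall_mem_imp_mem (J := I.powerset)
    (fun A _ => isClosed_polar (linCone a A)) w
  filter_upwards [(eventually_activeSet_subset (a := a) (b := b) (I := I) x).prod_nhds hw]
    with p ⟨hact, hpol⟩ hp
  exact ⟨hact, hpol _ (Finset.mem_powerset.2 (activeSet_subset _))
    (mem_normalGraph_iff.1 hp).2⟩

lemma exists_nhds_starConvex_normalGraph_inter {C : Set E} (hC : Convex ℝ C) {x w : E}
    (hx : x ∈ C) (hxw : (x, w) ∈ normalGraph a b I) :
    ∃ U ∈ 𝓝 (x, w), StarConvex ℝ (x, w) (normalGraph a b I ∩ C ×ˢ univ ∩ U) := by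
  obtain ⟨r, hr, hball⟩ := Metric.mem_nhds_iff.1 (eventually_normalGraph_local (a := a) (b := b)
    (I := I) x w)
  refine ⟨Metric.ball (x, w) r, Metric.ball_mem_nhds _ hr, ?_⟩
  rintro ⟨y, w'⟩ ⟨⟨hy, hyC, -⟩, hyU⟩ α β hα hβ hαβ
  obtain ⟨hact, hw⟩ := hball hyU hy
  rw [mem_normalGraph_iff] at hy hxw
  have hface : activeSet a b I y ⊆ activeSet a b I (α • x + β • y) := fun i hi =>
    mem_activeSet_add hαβ (hact hi) hi
  simp only [Prod.smul_mk, Prod.mk_add_mk]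
  refine ⟨⟨mem_normalGraph_iff.2 ⟨convex_polyhedron hxw.1 hy.1 hα hβ hαβ, ?_⟩,
    hC hx hyC hα hβ hαβ, trivial⟩, ?_⟩
  · exact polar_anti (linCone_anti hface) (convex_polar _ hw hy.2 hα hβ hαβ)
  · simpa using convex_ball (x, w) r (Metric.mem_ball_self hr) hyU hα hβ hαβ

lemma mem_tcone_polyhedron_iff {x u : E} (hx : x ∈ polyhedron a b I) :
    u ∈ tcone (polyhedron a b I) x ↔ ∃ p > (0 : ℝ), x + p • u ∈ polyhedron a b I := by
  refine ⟨fun hu => ?_, fun ⟨p, hp, h⟩ => mem_tcone_of_add_smul_mem convex_polyhedron hx hp h⟩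
  rw [tcone_polyhedron hx] at hu
  obtain ⟨p, h, hp⟩ := ((eventually_add_smul_mem_polyhedron hx hu).and self_mem_nhdsWithin).exists
  exact ⟨p, hp, h⟩

lemma snd_mem_of_eventually_pInner_nonpos {C : Set E} {x w : E} {v : E × E}
    (hxP : x ∈ polyhedron a b I) (hxC : x ∈ C) (hxw : (x, w) ∈ normalGraph a b I)
    (hv : ∀ᶠ y in 𝓝[normalGraph a b I ∩ C ×ˢ univ] (x, w), pInner v (y - (x, w)) ≤ 0) :
    v.2 ∈ tcone (polyhedron a b I) x ∩ {u | ⟪w, u⟫ = 0} := by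
  have hxN := (mem_normalGraph_iff.1 hxw).2
  have hnormal : ∀ w' ∈ polar (linCone a (activeSet a b I x)), ⟪v.2, w' - w⟫ ≤ 0 := by
    intro w' hw'
    have := nonpos_of_eventually_nonpos (pInner_smul_right v) hv (d := (0, w' - w)) ?_
    · simpa [pInner] using this
    filter_upwards [Ioo_mem_nhdsGT one_pos] with s hs
    simp only [Prod.smul_mk, Prod.mk_add_mk, smul_zero, add_zero]
    exact ⟨mem_normalGraph_iff.2 ⟨hxP, (convex_polar _).add_smul_sub_mem hxN hw'
      ⟨hs.1.le, hs.2.le⟩⟩, hxC, trivial⟩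
  have h₀ := hnormal _ (smul_mem_polar le_rfl hxN)
  have h₂ := hnormal _ (smul_mem_polar zero_le_two hxN)
  rw [inner_sub_right, real_inner_smul_right] at h₀ h₂
  refine ⟨(tcone_polyhedron hxP).symm ▸ fun i hi => ?_, ?_⟩
  · have := hnormal _ (add_mem_polar hxN (mem_polar_linCone hi))
    rwa [add_sub_cancel_left, real_inner_comm] at this
  · show ⟪w, v.2⟫ = 0
    rw [real_inner_comm]
    linarith

lemma fst_mem_polar_of_eventually_pInner_nonpos {J : Finset ι} {c : ι → ℝ} {x w : E}
    {v : E × E} (hx : x ∈ polyhedron a b I ∩ polyhedron a c J)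
    (hxw : (x, w) ∈ normalGraph a b I)
    (hv : ∀ᶠ y in 𝓝[normalGraph a b I ∩ polyhedron a c J ×ˢ univ] (x, w),
      pInner v (y - (x, w)) ≤ 0) :
    v.1 ∈ polar (tcone (polyhedron a b I ∩ polyhedron a c J) x ∩ {u | ⟪w, u⟫ = 0}) := by
  rintro u ⟨hu, huw : ⟪w, u⟫ = 0⟩
  have hxu : ∀ᶠ s in 𝓝[>] (0 : ℝ), x + s • u ∈ polyhedron a b I ∩ polyhedron a c J :=
    (eventually_add_smul_mem_polyhedron hx.1 (tcone_subset_linCone inter_subset_left x hu)).and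
      (eventually_add_smul_mem_polyhedron hx.2 (tcone_subset_linCone inter_subset_right x hu))
  have := nonpos_of_eventually_nonpos (pInner_smul_right v) hv (d := (u, 0)) ?_
  · simpa [pInner] using this
  filter_upwards [hxu] with s hs
  simp only [Prod.smul_mk, Prod.mk_add_mk, smul_zero, add_zero]
  refine ⟨⟨hs.1, fun y hy => ?_⟩, hs.2, trivial⟩
  rw [sub_add_eq_sub_sub, inner_sub_right, real_inner_smul_right, huw, mul_zero, sub_zero]
  exact hxw.2 y hy

lemma eventually_pInner_nonpos {C : Set E} {x w : E} {v : E × E}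
    (hx : x ∈ polyhedron a b I ∩ C) (hC : Convex ℝ C) (hxw : (x, w) ∈ normalGraph a b I)
    (hv₁ : v.1 ∈ polar (tcone (polyhedron a b I ∩ C) x ∩ {u | ⟪w, u⟫ = 0}))
    (hv₂ : v.2 ∈ tcone (polyhedron a b I) x ∩ {u | ⟪w, u⟫ = 0}) :
    ∀ᶠ y in 𝓝[normalGraph a b I ∩ C ×ˢ univ] (x, w), pInner v (y - (x, w)) ≤ 0 := by
  obtain ⟨hv₂, hwv : ⟪w, v.2⟫ = 0⟩ := hv₂
  rw [tcone_polyhedron hx.1] at hv₂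
  filter_upwards [mem_nhdsWithin_of_mem_nhds (eventually_normalGraph_local x w),
    self_mem_nhdsWithin] with y hloc hyS
  obtain ⟨hy, hyC, -⟩ := hyS
  obtain ⟨hact, hwy⟩ := hloc hy
  obtain ⟨hyP, hyN⟩ := mem_normalGraph_iff.1 hy
  -- `w` is normal at `y.1` as well, which pins `y.1 - x` to the hyperplane `w⊥`.
  have hwyx : ⟪w, y.1 - x⟫ = 0 := by
    refine le_antisymm (hxw.2 _ hyP) ?_
    have := hwy _ (sub_mem_linCone_activeSet hx.1 y.1)
    rw [inner_sub_right] at this ⊢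
    linarith
  have hyx : y.1 - x ∈ tcone (polyhedron a b I ∩ C) x :=
    mem_tcone_of_add_smul_mem (convex_polyhedron.inter hC) hx one_pos
      (by rw [one_smul, add_sub_cancel]; exact ⟨hyP, hyC⟩)
  have h₁ : ⟪v.1, y.1 - x⟫ ≤ 0 := hv₁ _ ⟨hyx, hwyx⟩
  have h₂ : ⟪v.2, y.2⟫ ≤ 0 := by
    rw [real_inner_comm]
    exact hyN _ (linCone_anti hact hv₂)
  show ⟪v.1, y.1 - x⟫ + ⟪v.2, y.2 - w⟫ ≤ 0
  rw [inner_sub_right (x := v.2), real_inner_comm w v.2, hwv]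
  linarith

end Euclidean

/-- Formula for the Fréchet normal cone with respect to `C × ℝⁿ` of the graph of the normal
cone mapping of the polyhedron `Θ`, at `(xb, xbs)`. -/
theorem stmt7 {m : ℕ} (a : Fin m → EuclideanSpace ℝ (Fin n)) (b : Fin m → ℝ)
    (I₁ I₂ : Finset (Fin m))
    (Θ C : Set (EuclideanSpace ℝ (Fin n)))
    (hΘ : Θ = {x | ∀ i ∈ I₁, (inner ℝ (a i) x : ℝ) ≤ b i})
    (hC : C = {x | ∀ i ∈ I₂, (inner ℝ (a i) x : ℝ) ≤ 0})
    (gphN : Set (EuclideanSpace ℝ (Fin n) × EuclideanSpace ℝ (Fin n)))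
    (hgph : gphN = {p | p.1 ∈ Θ ∧ ∀ y ∈ Θ, (inner ℝ p.2 (y - p.1) : ℝ) ≤ 0})
    (xb xbs : EuclideanSpace ℝ (Fin n)) (hxb : xb ∈ Θ ∩ C)
    (hxbs : ∀ y ∈ Θ, (inner ℝ xbs (y - xb) : ℝ) ≤ 0) :
    pFncWrt (C ×ˢ (univ : Set (EuclideanSpace ℝ (Fin n)))) gphN (xb, xbs) =
      ((polar (tcone (Θ ∩ C) xb ∩ {u | (inner ℝ xbs u : ℝ) = 0}) ∩ tcone C xb) ×ˢ
        (tcone Θ xb ∩ {u | (inner ℝ xbs u : ℝ) = 0})) := by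
  obtain rfl : Θ = polyhedron a b I₁ := hΘ
  obtain rfl : C = polyhedron a 0 I₂ := hC
  obtain rfl : gphN = normalGraph a b I₁ := hgph
  have hxw : (xb, xbs) ∈ normalGraph a b I₁ := ⟨hxb.1, hxbs⟩
  obtain ⟨U, hU, hstar⟩ := exists_nhds_starConvex_normalGraph_inter convex_polyhedron hxb.2 hxw
  ext v
  simp only [pFncWrt, mem_ofPred_eq]
  rw [forall_eventually_le_mul_norm_iff (pInner_smul_right v) hU hstar]
  constructor
  · rintro ⟨⟨p, hp, hpC, -⟩, hv⟩
    exact ⟨⟨fst_mem_polar_of_eventually_pInner_nonpos hxb hxw hv,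
      (mem_tcone_polyhedron_iff hxb.2).2 ⟨p, hp, hpC⟩⟩,
      snd_mem_of_eventually_pInner_nonpos hxb.1 hxb.2 hxw hv⟩
  · rintro ⟨⟨hv₁, hv₁C⟩, hv₂⟩
    obtain ⟨p, hp, hpC⟩ := (mem_tcone_polyhedron_iff hxb.2).1 hv₁C
    exact ⟨⟨p, hp, hpC, trivial⟩, eventually_pInner_nonpos hxb convex_polyhedron hxw hv₁ hv₂⟩
end
end

section
/- Let Θ = {x ∈ ℝⁿ : ⟨aᵢ, x⟩ ≤ bᵢ, i ∈ I₁} be a polyhedron, x̄ ∈ Θ, x̄* ∈ N(x̄, Θ), and suppose w ∈ T(x̄, Θ) with ⟨x̄*, w⟩ = 0. Then for all sufficiently large k, the point xₖ = x̄ + k⁻¹ w lies in Θ and x̄* ∈ N(xₖ, Θ). -/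
/-!
Only the constraints active at `xb` can obstruct moving from `xb` along `w`. Along the
tangent sequence `xb + t k • u k` an active constraint gives `t k * ⟪a i, u k⟫ ≤ 0`, hence
`⟪a i, w⟫ ≤ 0` in the limit; inactive constraints hold with slack, which absorbs the small
step `k⁻¹ • w`. Since `⟪xbs, w⟫ = 0`, moving the base point along `w` does not change the
normal-cone inequality.
-/

open Filter Topology
open scoped RealInnerProductSpace

section Halfspace

variable {E : Type*} [NormedAddCommGroup E] [InnerProductSpace ℝ E]

theorem inner_nonpos_of_tendsto_of_add_smul_mem {a x w : E} {t : ℕ → ℝ} {u : ℕ → E}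
    (ht : ∀ k, 0 < t k) (hu : Tendsto u atTop (𝓝 w))
    (hmem : ∀ k, ⟪a, x + t k • u k⟫ ≤ ⟪a, x⟫) : ⟪a, w⟫ ≤ 0 := by
  have hu_nonpos (k : ℕ) : ⟪a, u k⟫ ≤ 0 := by
    have := hmem k
    rw [inner_add_right, real_inner_smul_right] at this
    exact nonpos_of_mul_nonpos_right (by linarith) (ht k)
  exact le_of_tendsto' (tendsto_const_nhds.inner hu) hu_nonpos

theorem eventually_inner_add_inv_smul_le {a x w : E} {β : ℝ} (hx : ⟪a, x⟫ ≤ β)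
    (hactive : ⟪a, x⟫ = β → ⟪a, w⟫ ≤ 0) :
    ∀ᶠ k : ℕ in atTop, ⟪a, x + (k : ℝ)⁻¹ • w⟫ ≤ β := by
  rcases hx.lt_or_eq with hlt | heq
  · have hlim : Tendsto (fun k : ℕ => ⟪a, x + (k : ℝ)⁻¹ • w⟫) atTop (𝓝 ⟪a, x⟫) := by
      have hstep : Tendsto (fun k : ℕ => (k : ℝ)⁻¹ • w) atTop (𝓝 0) := by
        simpa using (tendsto_inv_atTop_nhds_zero_nat (𝕜 := ℝ)).smul_const w
      simpa using tendsto_const_nhds.inner (hstep.const_add x)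
    exact (hlim.eventually (gt_mem_nhds hlt)).mono fun _ => le_of_lt
  · refine Eventually.of_forall fun k => ?_
    rw [inner_add_right, real_inner_smul_right, heq]
    have : (k : ℝ)⁻¹ * ⟪a, w⟫ ≤ 0 :=
      mul_nonpos_of_nonneg_of_nonpos (by positivity) (hactive heq)
    linarith

theorem inner_sub_add_smul_eq_of_inner_eq_zero {v w : E} (h : ⟪v, w⟫ = 0) (y x : E)
    (c : ℝ) : ⟪v, y - (x + c • w)⟫ = ⟪v, y - x⟫ := by
  rw [sub_add_eq_sub_sub, inner_sub_right _ (y - x), real_inner_smul_right, h, mul_zero,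
    sub_zero]

end Halfspace

/-- Persistence of normal vectors along tangent directions orthogonal to them: if
`w ∈ T(xb, Θ)` and `⟪xbs, w⟫ = 0`, then for all large `k` the point `xₖ = xb + k⁻¹ w`
lies in `Θ` and `xbs ∈ N(xₖ, Θ)`. -/
theorem stmt9 {n m : ℕ} (a : Fin m → EuclideanSpace ℝ (Fin n)) (b : Fin m → ℝ)
    (I₁ : Finset (Fin m)) (Θ : Set (EuclideanSpace ℝ (Fin n)))
    (hΘ : Θ = {x | ∀ i ∈ I₁, (inner ℝ (a i) x : ℝ) ≤ b i})
    (xb xbs w : EuclideanSpace ℝ (Fin n)) (hx : xb ∈ Θ)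
    (hxbs : ∀ y ∈ Θ, (inner ℝ xbs (y - xb) : ℝ) ≤ 0)
    (hw : ∃ (t : ℕ → ℝ) (u : ℕ → EuclideanSpace ℝ (Fin n)),
      (∀ k, 0 < t k) ∧ Tendsto t atTop (𝓝 0) ∧ Tendsto u atTop (𝓝 w) ∧
      ∀ k, xb + t k • u k ∈ Θ)
    (horth : (inner ℝ xbs w : ℝ) = 0) :
    ∃ K : ℕ, ∀ k ≥ K, 0 < k →
      xb + ((k : ℝ)⁻¹) • w ∈ Θ ∧
      ∀ y ∈ Θ, (inner ℝ xbs (y - (xb + ((k : ℝ)⁻¹) • w)) : ℝ) ≤ 0 := by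
  obtain ⟨t, u, ht, -, hu, hmem⟩ := hw
  subst hΘ
  have hconstraint : ∀ i ∈ I₁, ∀ᶠ k : ℕ in atTop, ⟪a i, xb + (k : ℝ)⁻¹ • w⟫ ≤ b i :=
    fun i hi => eventually_inner_add_inv_smul_le (hx i hi) fun hactive =>
      inner_nonpos_of_tendsto_of_add_smul_mem ht hu fun k => hactive ▸ hmem k i hi
  obtain ⟨K, hK⟩ := eventually_atTop.mp (I₁.eventually_all.mpr hconstraint)
  refine ⟨K, fun k hk _ => ⟨hK k hk, fun y hy => ?_⟩⟩
  rw [inner_sub_add_smul_eq_of_inner_eq_zero horth]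
  exact hxbs y hy
end
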